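/- Let g : ℝ → ℂ satisfy |g(t)| ≤ C(1+|t|)^{-η} for some C > 0 and η > 1. Then for all x ∈ ℝ, y > 0, and ξ₁, ξ₂, ζ ∈ ℝ: Θ_g(x+1, y; ξ₁ + ξ₂ + ½, ξ₂, ζ + ξ₂/4) = Θ_g(x, y; ξ₁, ξ₂, ζ). -/
import Mathlib


open Filter MeasureTheory Real

/-- `e(w) = exp(2πiw)` for real `w`. -/
noncomputable def eC (w : ℝ) : ℂ := Complex.exp (2 * Real.pi * Complex.I * w)

/-- The theta sum `Θ_g(x,y;ξ₁,ξ₂,ζ) = y^{1/4} e(ζ-ξ₁ξ₂/2) Σ_{n∈ℤ} g((n-ξ₂)√y) e(½(n-ξ₂)²x+nξ₁)`. -/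
noncomputable def thetaSum (g : ℝ → ℂ) (x y ξ₁ ξ₂ ζ : ℝ) : ℂ :=
  ((y ^ ((1 : ℝ) / 4) : ℝ) : ℂ) * eC (ζ - ξ₁ * ξ₂ / 2) *
    ∑' n : ℤ, g (((n : ℝ) - ξ₂) * Real.sqrt y) *
      eC (((n : ℝ) - ξ₂) ^ 2 * x / 2 + (n : ℝ) * ξ₁)

lemma eC_add (u v : ℝ) : eC (u + v) = eC u * eC v := by
  unfold eC
  rw [← Complex.exp_add]
  push_cast
  ring_nf

lemma eC_int (k : ℤ) : eC (k : ℝ) = 1 := by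
  unfold eC
  push_cast
  rw [mul_comm]
  exact_mod_cast Complex.exp_int_mul_two_pi_mul_I k

/-- invariance of the theta sum under the lattice generator γ₂, i.e.
`Θ_g(x+1, y; ξ₁+ξ₂+½, ξ₂, ζ+ξ₂/4) = Θ_g(x, y; ξ₁, ξ₂, ζ)`
for `g` with polynomial decay `|g(t)| ≤ C(1+|t|)^{-η}`, `η > 1`. -/
theorem statement15 (g : ℝ → ℂ)
    (hdecay : ∃ C : ℝ, 0 < C ∧ ∃ η : ℝ, 1 < η ∧ ∀ t : ℝ, ‖g t‖ ≤ C * (1 + |t|) ^ (-η)) :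
    ∀ (x y ξ₁ ξ₂ ζ : ℝ), 0 < y →
      thetaSum g (x + 1) y (ξ₁ + ξ₂ + 1 / 2) ξ₂ (ζ + ξ₂ / 4) = thetaSum g x y ξ₁ ξ₂ ζ := by
  intro x y ξ₁ ξ₂ ζ hy
  unfold thetaSum
  rw [mul_assoc, mul_assoc]
  congr 1
  rw [← tsum_mul_left, ← tsum_mul_left]
  refine tsum_congr fun n => ?_
  obtain ⟨k, hk⟩ := Int.even_mul_succ_self n
  have hkR : ((n : ℝ)) * ((n : ℝ) + 1) = (k : ℝ) + (k : ℝ) := by exact_mod_cast hk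
  have key : (ζ + ξ₂ / 4 - (ξ₁ + ξ₂ + 1 / 2) * ξ₂ / 2) +
      (((n : ℝ) - ξ₂) ^ 2 * (x + 1) / 2 + (n : ℝ) * (ξ₁ + ξ₂ + 1 / 2)) =
      ((ζ - ξ₁ * ξ₂ / 2) + (((n : ℝ) - ξ₂) ^ 2 * x / 2 + (n : ℝ) * ξ₁)) + (k : ℝ) := by
    have : (k : ℝ) = ((n : ℝ)) * ((n : ℝ) + 1) / 2 := by rw [hkR]; ring
    rw [this]; ring
  calc eC (ζ + ξ₂ / 4 - (ξ₁ + ξ₂ + 1 / 2) * ξ₂ / 2) *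
      (g (((n : ℝ) - ξ₂) * Real.sqrt y) *
        eC (((n : ℝ) - ξ₂) ^ 2 * (x + 1) / 2 + (n : ℝ) * (ξ₁ + ξ₂ + 1 / 2)))
      = g (((n : ℝ) - ξ₂) * Real.sqrt y) *
        eC ((ζ + ξ₂ / 4 - (ξ₁ + ξ₂ + 1 / 2) * ξ₂ / 2) +
          (((n : ℝ) - ξ₂) ^ 2 * (x + 1) / 2 + (n : ℝ) * (ξ₁ + ξ₂ + 1 / 2))) := by
        rw [mul_left_comm, ← eC_add]
    _ = g (((n : ℝ) - ξ₂) * Real.sqrt y) *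
        eC ((ζ - ξ₁ * ξ₂ / 2) + (((n : ℝ) - ξ₂) ^ 2 * x / 2 + (n : ℝ) * ξ₁)) := by
        rw [key, eC_add, eC_int, mul_one]
    _ = eC (ζ - ξ₁ * ξ₂ / 2) *
        (g (((n : ℝ) - ξ₂) * Real.sqrt y) *
          eC (((n : ℝ) - ξ₂) ^ 2 * x / 2 + (n : ℝ) * ξ₁)) := by
        rw [eC_add (ζ - ξ₁ * ξ₂ / 2), mul_left_comm]
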